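/- Let u ∈ {−1, 0, 1}^n with exactly k nonzero entries, and let y ∈ ℝ^n with ‖y − u‖² ≤ δk/2 for some δ ∈ (0,1]. Let S' be a set of k indices with largest |y_i| (with threshold t so that |y_i| ≥ t for i ∈ S' and t ≤ 1). Then |{i : u_i ≠ 0} ∖ S'| ≤ δk. -/
import Mathlib


/-- Thresholding/rounding: if y is δk/2-close to a signed indicator u with k nonzero
entries, and S' is a top-k set for |y| with threshold t ≤ 1, then S' misses at most
δk of the support of u. -/
theorem stmt_15 (n k : ℕ) (δ t : ℝ) (hδ0 : 0 < δ) (hδ1 : δ ≤ 1)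
    (u y : Fin n → ℝ)
    (hu : ∀ i, u i = -1 ∨ u i = 0 ∨ u i = 1)
    (hk : (Finset.univ.filter (fun i => u i ≠ 0)).card = k)
    (hclose : ∑ i, (y i - u i) ^ 2 ≤ δ * k / 2)
    (S' : Finset (Fin n)) (hS' : S'.card = k)
    (ht0 : 0 ≤ t) (ht1 : t ≤ 1)
    (hin : ∀ i ∈ S', t ≤ |y i|) (hout : ∀ i ∉ S', |y i| ≤ t) :
    (((Finset.univ.filter (fun i => u i ≠ 0)) \ S').card : ℝ) ≤ δ * k := by
  classical
  set S := Finset.univ.filter (fun i => u i ≠ 0) with hSdef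
  have hdisj : Disjoint (S \ S') (S' \ S) := disjoint_sdiff_sdiff
  have h1 := Finset.card_sdiff_add_card_inter S S'
  have h2 := Finset.card_sdiff_add_card_inter S' S
  rw [Finset.inter_comm] at h2
  have hcards : (S' \ S).card = (S \ S').card := by omega
  have hb1 : ∀ i ∈ S \ S', (1 - t) ^ 2 ≤ (y i - u i) ^ 2 := by
    intro i hi
    obtain ⟨hiS, hiS'⟩ := Finset.mem_sdiff.mp hi
    have hne : u i ≠ 0 := (Finset.mem_filter.mp hiS).2
    have hy := abs_le.mp (hout i hiS')
    rcases hu i with h | h | h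
    · nlinarith [hy.1, hy.2]
    · exact absurd h hne
    · nlinarith [hy.1, hy.2]
  have hb2 : ∀ i ∈ S' \ S, t ^ 2 ≤ (y i - u i) ^ 2 := by
    intro i hi
    obtain ⟨hiS', hiS⟩ := Finset.mem_sdiff.mp hi
    have hu0 : u i = 0 := by
      by_contra h
      exact hiS (Finset.mem_filter.mpr ⟨Finset.mem_univ i, h⟩)
    have := hin i hiS'
    rw [hu0]
    nlinarith [sq_abs (y i)]
  have hsum1 : ((S \ S').card : ℝ) * (1 - t) ^ 2 ≤ ∑ i ∈ S \ S', (y i - u i) ^ 2 := by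
    have := Finset.card_nsmul_le_sum (S \ S') (fun i => (y i - u i) ^ 2) ((1 - t) ^ 2) hb1
    simpa [nsmul_eq_mul, mul_comm] using this
  have hsum2 : ((S \ S').card : ℝ) * t ^ 2 ≤ ∑ i ∈ S' \ S, (y i - u i) ^ 2 := by
    have := Finset.card_nsmul_le_sum (S' \ S) (fun i => (y i - u i) ^ 2) (t ^ 2) hb2
    rw [hcards] at this
    simpa [nsmul_eq_mul, mul_comm] using this
  have htot : ∑ i ∈ (S \ S') ∪ (S' \ S), (y i - u i) ^ 2 ≤ ∑ i, (y i - u i) ^ 2 :=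
    Finset.sum_le_sum_of_subset_of_nonneg (Finset.subset_univ _)
      (fun i _ _ => sq_nonneg _)
  rw [Finset.sum_union hdisj] at htot
  have hcnn : (0 : ℝ) ≤ ((S \ S').card : ℝ) := Nat.cast_nonneg _
  nlinarith [sq_nonneg (2 * t - 1), hclose]
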